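/- Let U and V be two universal Turing machines. Then there exists a constant c' such that for every integer c ≥ 0 and every binary string x: if ld_{c,U}(x) ≥ |x| (the unscaled logical depth of x on U at significance c is at least the length of x), then ld^bb_{c+c',V}(x) ≤ ld^bb_{c,U}(x) + c'. -/

import Mathlib

/-- Bijective binary encoding of binary strings as natural numbers. -/
def strToNat : List Bool → ℕ
  | [] => 0
  | b :: t => (if b then 2 else 1) + 2 * strToNat t

/-- The partial result of running machine `M` on program `p` and auxiliary input `d`. -/
def evalS (M : Nat.Partrec.Code) (p d : List Bool) : Part ℕ :=
  M.eval (Nat.pair (strToNat p) (strToNat d))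

/-- `M(p, d) = x`. -/
def outputs (M : Nat.Partrec.Code) (p d x : List Bool) : Prop :=
  strToNat x ∈ evalS M p d

/-- `M` halts on program `p` (with empty auxiliary input). -/
def haltsOn (M : Nat.Partrec.Code) (p : List Bool) : Prop :=
  (evalS M p []).Dom

/-- The number of computation steps taken by `M` on program `p` (with empty auxiliary
input); meaningful only when `M` halts on `p`. -/
noncomputable def halttime (M : Nat.Partrec.Code) (p : List Bool) : ℕ :=
  sInf {t | (Nat.Partrec.Code.evaln t M (Nat.pair (strToNat p) 0)).isSome}

/-- `M` is a universal machine: it simulates every machine `V` via a prefix `w_V`. -/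
def Universal (M : Nat.Partrec.Code) : Prop :=
  ∀ V : Nat.Partrec.Code, ∃ w : List Bool, ∀ p y : List Bool,
    (evalS V p y).Dom → evalS M (w ++ p) y = evalS V p y

/-- Plain Kolmogorov complexity `C(x)` on machine `M`. -/
noncomputable def Cpx (M : Nat.Partrec.Code) (x : List Bool) : ℕ :=
  sInf {n | ∃ p : List Bool, p.length = n ∧ outputs M p [] x}

/-- Sophistication of `x` at (integer) significance level `c`. -/
noncomputable def soph (M : Nat.Partrec.Code) (c : ℤ) (x : List Bool) : ℕ :=
  sInf {n | ∃ p : List Bool, p.length = n ∧ (∀ d : List Bool, (evalS M p d).Dom) ∧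
    ∃ d : List Bool, outputs M p d x ∧ (p.length + d.length : ℤ) ≤ (Cpx M x : ℤ) + c}

/-- Logical depth of `x` at significance level `c`. -/
noncomputable def ld (M : Nat.Partrec.Code) (c : ℕ) (x : List Bool) : ℕ :=
  sInf {t | ∃ p : List Bool, p.length ≤ Cpx M x + c ∧ outputs M p [] x ∧ halttime M p = t}

/-- The inverse Busy Beaver function `bb(n)`. -/
noncomputable def bbInv (M : Nat.Partrec.Code) (n : ℕ) : ℕ :=
  sInf {k | ∃ p : List Bool, p.length = k ∧ haltsOn M p ∧ n ≤ halttime M p}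

/-- Busy Beaver logical depth of `x` at significance `c`. -/
noncomputable def ldbb (M : Nat.Partrec.Code) (c : ℕ) (x : List Bool) : ℕ :=
  bbInv M (ld M c x)

/-- The Busy Beaver function `BB(l)`. -/
noncomputable def BB (M : Nat.Partrec.Code) (l : ℕ) : ℕ :=
  sSup {t | ∃ p : List Bool, p.length ≤ l ∧ haltsOn M p ∧ halttime M p = t}

/-- Canonical encoding of a finite set of binary strings: the code of the sorted list
of the codes of its elements. -/
def setCode (S : Finset (List Bool)) : ℕ :=
  Encodable.encode ((S.image strToNat).sort (· ≤ ·))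

/-- Kolmogorov complexity `C(S)` of a finite set of binary strings on machine `M`. -/
noncomputable def CSet (M : Nat.Partrec.Code) (S : Finset (List Bool)) : ℕ :=
  sInf {n | ∃ p : List Bool, p.length = n ∧ setCode S ∈ evalS M p []}

/-- Conditional Kolmogorov complexity `C(x | m)` where the condition is a natural number. -/
noncomputable def CpxCondN (M : Nat.Partrec.Code) (x : List Bool) (m : ℕ) : ℕ :=
  sInf {n | ∃ p : List Bool, p.length = n ∧ strToNat x ∈ M.eval (Nat.pair (strToNat p) m)}

/-!
Let `p` witness `ld_{c,U}(x)` and let `q` be a shortest program on which `U` runs at least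
that long. Through a prefix `w₁`, `V` runs `w₁ p`, which outputs `x` and, since
`C_U(x) ≤ C_V(x) + O(1)`, is short enough to bound `ld_{c+c',V}(x)` by its running time.
A fixed machine reads `q`, computes `T = halttime_U(q)`, searches the least fuel `K` with which
`V` completes `w₁ b` for every `b` halting on `U` within `T` steps (among them `p`), and outputs
a number exceeding every output `V` can produce within `K` steps. Run on `V` through a fixed
prefix, this program of length `|q| + O(1)` must therefore take more than
`K ≥ halttime_V(w₁ p) ≥ ld_{c+c',V}(x)` steps.
-/

open Nat.Partrec Code

lemma strToNat_append (w p : List Bool) :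
    strToNat (w ++ p) = strToNat w + 2 ^ w.length * strToNat p := by
  induction w with
  | nil => simp [strToNat]
  | cons b t ih => simp only [List.cons_append, strToNat, ih, List.length_cons, pow_succ]; ring

lemma strToNat_surjective : Function.Surjective strToNat := by
  intro n
  induction n using Nat.strong_induction_on with
  | _ n ih =>
    rcases n with _ | n
    · exact ⟨[], rfl⟩
    obtain ⟨s, hs⟩ := ih (n / 2) (by omega)
    refine ⟨(n % 2 == 1) :: s, ?_⟩
    simp only [strToNat, hs, beq_iff_eq]
    split <;> omega

lemma haltsOn_of_outputs {M : Code} {p x : List Bool} (h : outputs M p [] x) : haltsOn M p :=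
  Part.dom_iff_mem.2 ⟨_, h⟩

def Simulates (V U : Code) (w : List Bool) : Prop :=
  ∀ p, haltsOn U p → evalS V (w ++ p) [] = evalS U p []

lemma Simulates.mem {V U : Code} {w p : List Bool} {m : ℕ} (hw : Simulates V U w)
    (h : m ∈ evalS U p []) : m ∈ evalS V (w ++ p) [] := by
  rwa [hw p (Part.dom_iff_mem.2 ⟨m, h⟩)]

lemma Universal.exists_simulates {V : Code} (hV : Universal V) (U : Code) :
    ∃ w, Simulates V U w := by
  obtain ⟨w, hw⟩ := hV U
  exact ⟨w, fun p hp => hw p [] hp⟩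

lemma Universal.exists_outputs {U : Code} (hU : Universal U) (x : List Bool) :
    ∃ p, outputs U p [] x := by
  obtain ⟨w, hw⟩ := hU.exists_simulates (Code.const (strToNat x))
  exact ⟨w ++ [], hw.mem (by simp [evalS])⟩

section Halttime

variable {M : Code} {p : List Bool}

lemma isSome_evaln_halttime (h : haltsOn M p) :
    (evaln (halttime M p) M (Nat.pair (strToNat p) 0)).isSome := by
  obtain ⟨m, hm⟩ := Part.dom_iff_mem.1 h
  obtain ⟨k, hk⟩ := evaln_complete.1 hm
  exact Nat.sInf_mem (s := {t | (evaln t M (Nat.pair (strToNat p) 0)).isSome})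
    ⟨k, Option.isSome_iff_exists.2 ⟨m, hk⟩⟩

lemma halttime_le_of_isSome {k : ℕ} (h : (evaln k M (Nat.pair (strToNat p) 0)).isSome) :
    halttime M p ≤ k :=
  Nat.sInf_le h

lemma halttime_mem_rfind (h : haltsOn M p) :
    halttime M p ∈ Nat.rfind fun t => Part.some (evaln t M (Nat.pair (strToNat p) 0)).isSome := by
  refine Nat.mem_rfind.2 ⟨by simpa using isSome_evaln_halttime h, fun {t} ht => ?_⟩
  simpa using mt halttime_le_of_isSome (not_le.2 ht)

lemma isSome_evaln_mono {c : Code} {n k k' : ℕ} (hk : k ≤ k') (h : (evaln k c n).isSome) :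
    (evaln k' c n).isSome := by
  obtain ⟨m, hm⟩ := Option.isSome_iff_exists.1 h
  exact Option.isSome_iff_exists.2 ⟨m, evaln_mono hk hm⟩

lemma strToNat_lt_halttime (h : haltsOn M p) : strToNat p < halttime M p := by
  obtain ⟨m, hm⟩ := Option.isSome_iff_exists.1 (isSome_evaln_halttime h)
  exact (Nat.left_le_pair _ _).trans_lt (evaln_bound hm)

end Halttime

/- Stated on codes `b` rather than on strings so that it is decided by a bounded search;
`strToNat w + 2 ^ w.length * b` is the code of `w ++ b`. -/
def SimulatesWithin (U V : Code) (w : List Bool) (T K : ℕ) : Prop :=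
  ∀ b < T, (evaln T U (Nat.pair b 0)).isSome →
    (evaln K V (Nat.pair (strToNat w + 2 ^ w.length * b) 0)).isSome

instance (U V : Code) (w : List Bool) : DecidableRel (SimulatesWithin U V w) :=
  fun T K => by unfold SimulatesWithin; infer_instance

lemma primrecRel_simulatesWithin (U V : Code) (w : List Bool) :
    PrimrecRel (SimulatesWithin U V w) := by
  have hR : PrimrecRel fun (b : ℕ) (TK : ℕ × ℕ) =>
      (evaln TK.1 U (Nat.pair b 0)).isSome →
        (evaln TK.2 V (Nat.pair (strToNat w + 2 ^ w.length * b) 0)).isSome := by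
    refine Primrec₂.primrecRel (Primrec₂.of_eq (f := fun b (TK : ℕ × ℕ) =>
      !(evaln TK.1 U (Nat.pair b 0)).isSome ||
        (evaln TK.2 V (Nat.pair (strToNat w + 2 ^ w.length * b) 0)).isSome) ?_ ?_)
    · have hU : Primrec fun x : ℕ × (ℕ × ℕ) => (evaln x.2.1 U (Nat.pair x.1 0)).isSome :=
        Primrec.option_isSome.comp <| primrec_evaln.comp <|
          ((Primrec.fst.comp Primrec.snd).pair (Primrec.const U)).pair
            (Primrec₂.natPair.comp Primrec.fst (Primrec.const 0))
      have hV : Primrec fun x : ℕ × (ℕ × ℕ) =>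
          (evaln x.2.2 V (Nat.pair (strToNat w + 2 ^ w.length * x.1) 0)).isSome :=
        Primrec.option_isSome.comp <| primrec_evaln.comp <|
          ((Primrec.snd.comp Primrec.snd).pair (Primrec.const V)).pair
            (Primrec₂.natPair.comp (Primrec.nat_add.comp (Primrec.const _)
              (Primrec.nat_mul.comp (Primrec.const _) Primrec.fst)) (Primrec.const 0))
      exact Primrec.or.comp (Primrec.not.comp hU) hV
    · intro b TK
      cases (evaln TK.1 U (Nat.pair b 0)).isSome <;> simp
  exact (hR.forall_mem_list.comp₂ (Primrec.list_range.comp₂ Primrec₂.left) Primrec₂.pair).of_eq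
    fun _ _ => by simp only [List.mem_range, SimulatesWithin]

section Simulation

variable {U V : Code} {w : List Bool}

lemma exists_simulatesWithin (hw : Simulates V U w) (T : ℕ) :
    ∃ K, SimulatesWithin U V w T K := by
  have h : ∀ b < T, (evaln T U (Nat.pair b 0)).isSome →
      ∃ K, (evaln K V (Nat.pair (strToNat w + 2 ^ w.length * b) 0)).isSome := by
    intro b _ hb
    obtain ⟨p, rfl⟩ := strToNat_surjective b
    obtain ⟨m, hm⟩ := Option.isSome_iff_exists.1 hb
    obtain ⟨K, hK⟩ := evaln_complete.1 (hw.mem (evaln_sound hm))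
    exact ⟨K, Option.isSome_iff_exists.2 ⟨m, by rwa [← strToNat_append]⟩⟩
  choose! K hK using h
  exact ⟨(Finset.range T).sup K, fun b hb hU =>
    isSome_evaln_mono (Finset.le_sup (Finset.mem_range.2 hb)) (hK b hb hU)⟩

lemma SimulatesWithin.halttime_le {T K : ℕ} {p : List Bool} (hK : SimulatesWithin U V w T K)
    (hp : haltsOn U p) (hT : halttime U p ≤ T) : halttime V (w ++ p) ≤ K := by
  refine halttime_le_of_isSome ?_
  rw [strToNat_append]
  exact hK _ ((strToNat_lt_halttime hp).trans_le hT)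
    (isSome_evaln_mono hT (isSome_evaln_halttime hp))

end Simulation

def maxOutput (c : Code) (k : ℕ) : ℕ :=
  (Finset.range k).sup fun n => (evaln k c n).getD 0

section MaxOutput

variable {c : Code}

lemma le_maxOutput {k n m : ℕ} (h : m ∈ evaln k c n) : m ≤ maxOutput c k := by
  refine le_trans ?_ (Finset.le_sup (f := fun n => (evaln k c n).getD 0)
    (Finset.mem_range.2 (evaln_bound h)))
  simp [Option.mem_def.1 h]

lemma maxOutput_mono : Monotone (maxOutput c) := by
  intro k k' hk
  refine Finset.sup_le fun n _ => ?_
  rcases h : evaln k c n with _ | m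
  · simp
  · exact le_maxOutput (evaln_mono hk h)

lemma lt_halttime_of_maxOutput_lt {p : List Bool} {m K : ℕ} (hm : m ∈ evalS c p [])
    (hK : maxOutput c K < m) : K < halttime c p := by
  by_contra! h
  obtain ⟨m', hm'⟩ :=
    Option.isSome_iff_exists.1 (isSome_evaln_halttime (Part.dom_iff_mem.2 ⟨m, hm⟩))
  have : m' = m := Part.mem_unique (evaln_sound hm') hm
  subst this
  exact absurd ((le_maxOutput hm').trans (maxOutput_mono h)) (not_le.2 hK)

lemma primrec_maxOutput (c : Code) : Primrec (maxOutput c) := by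
  have h : ∀ k,
      maxOutput c k = ((List.range k).map fun n => (evaln k c n).getD 0).foldr max 0 := by
    intro k
    simp [maxOutput, Finset.sup_def, Finset.range_val, Multiset.range, Multiset.sup_coe]
  refine Primrec.of_eq ?_ fun k => (h k).symm
  refine Primrec.list_foldr (Primrec.list_map Primrec.list_range ?_) (Primrec.const 0)
    (Primrec.nat_max.comp (Primrec.fst.comp Primrec.snd) (Primrec.snd.comp Primrec.snd)).to₂
  exact Primrec.option_getD.comp (primrec_evaln.comp ((Primrec.fst.pair (Primrec.const c)).pair
    Primrec.snd)) (Primrec.const 0) |>.to₂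

end MaxOutput

def outrunSimulation (U V : Code) (w : List Bool) : ℕ →. ℕ := fun n =>
  (Nat.rfind fun T => Part.some (evaln T U n).isSome).bind fun T =>
    (Nat.rfind fun K => Part.some (decide (SimulatesWithin U V w T K))).map
      fun K => maxOutput V K + 1

lemma partrec_outrunSimulation (U V : Code) (w : List Bool) :
    Partrec (outrunSimulation U V w) := by
  have hT : Partrec fun n => Nat.rfind fun T => Part.some (evaln T U n).isSome :=
    Partrec.rfind (Primrec.option_isSome.comp <| primrec_evaln.comp <|
      (Primrec.snd.pair (Primrec.const U)).pair Primrec.fst).to_comp.partrec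
  have hK : Partrec fun T => Nat.rfind fun K => Part.some (decide (SimulatesWithin U V w T K)) :=
    Partrec.rfind (primrecRel_simulatesWithin U V w).decide.to_comp.partrec
  exact hT.bind ((hK.comp Computable.snd).map
    ((Primrec.succ.comp (primrec_maxOutput V)).to_comp.comp Computable.snd).to₂).to₂

lemma exists_mem_outrunSimulation {U V : Code} {w q : List Bool}
    (hw : Simulates V U w) (hq : haltsOn U q) :
    ∃ K, SimulatesWithin U V w (halttime U q) K ∧
      maxOutput V K + 1 ∈ outrunSimulation U V w (Nat.pair (strToNat q) 0) := by
  obtain ⟨K₀, hK₀⟩ := exists_simulatesWithin hw (halttime U q)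
  obtain ⟨K, hK, -⟩ := Nat.rfind_min'
    (p := fun K => decide (SimulatesWithin U V w (halttime U q) K)) (decide_eq_true hK₀)
  refine ⟨K, of_decide_eq_true (by simpa using Nat.rfind_spec hK), ?_⟩
  exact Part.mem_bind_iff.2 ⟨_, halttime_mem_rfind hq, (Part.mem_map_iff _).2 ⟨K, hK, rfl⟩⟩

section Witnesses

variable {M : Code} {x : List Bool}

lemma Cpx_le_of_outputs {p : List Bool} (h : outputs M p [] x) : Cpx M x ≤ p.length :=
  Nat.sInf_le ⟨p, rfl, h⟩

lemma exists_length_eq_Cpx (h : ∃ p, outputs M p [] x) :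
    ∃ p, p.length = Cpx M x ∧ outputs M p [] x := by
  obtain ⟨p, hp⟩ := h
  exact Nat.sInf_mem (s := {n | ∃ p : List Bool, p.length = n ∧ outputs M p [] x})
    ⟨p.length, p, rfl, hp⟩

lemma Cpx_le_of_simulates {V : Code} {w : List Bool}
    (hw : Simulates M V w) (h : ∃ p, outputs V p [] x) : Cpx M x ≤ w.length + Cpx V x := by
  obtain ⟨p, hp_len, hp⟩ := exists_length_eq_Cpx h
  simpa [hp_len] using Cpx_le_of_outputs (hw.mem hp)

lemma ld_le_halttime {c : ℕ} {p : List Bool} (hp : outputs M p [] x)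
    (hlen : p.length ≤ Cpx M x + c) : ld M c x ≤ halttime M p :=
  Nat.sInf_le ⟨p, hlen, hp, rfl⟩

lemma exists_halttime_eq_ld (h : ∃ p, outputs M p [] x) (c : ℕ) :
    ∃ p, p.length ≤ Cpx M x + c ∧ outputs M p [] x ∧ halttime M p = ld M c x := by
  obtain ⟨p, hp_len, hp⟩ := exists_length_eq_Cpx h
  exact Nat.sInf_mem (s := {t | ∃ p : List Bool, p.length ≤ Cpx M x + c ∧ outputs M p [] x ∧
    halttime M p = t}) ⟨_, p, by omega, hp, rfl⟩

lemma bbInv_le {n : ℕ} {p : List Bool} (hp : haltsOn M p) (hn : n ≤ halttime M p) :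
    bbInv M n ≤ p.length :=
  Nat.sInf_le ⟨p, rfl, hp, hn⟩

lemma exists_length_eq_bbInv {n : ℕ} {p : List Bool} (hp : haltsOn M p)
    (hn : n ≤ halttime M p) :
    ∃ q, q.length = bbInv M n ∧ haltsOn M q ∧ n ≤ halttime M q :=
  Nat.sInf_mem (s := {k | ∃ q : List Bool, q.length = k ∧ haltsOn M q ∧ n ≤ halttime M q})
    ⟨_, p, rfl, hp, hn⟩

end Witnesses

theorem ldbb_is_invariant :
    ∀ U V : Nat.Partrec.Code, Universal U → Universal V →
    ∃ c' : ℕ, ∀ c : ℕ, ∀ x : List Bool, x.length ≤ ld U c x →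
      ldbb V (c + c') x ≤ ldbb U c x + c' := by
  intro U V hU hV
  obtain ⟨w₁, hw₁⟩ := hV.exists_simulates U
  obtain ⟨w₂, hw₂⟩ := hU.exists_simulates V
  obtain ⟨W, hW⟩ := exists_code.1 (Partrec.nat_iff.1 (partrec_outrunSimulation U V w₁))
  obtain ⟨wW, hwW⟩ := hV.exists_simulates W
  refine ⟨w₁.length + w₂.length + wW.length, fun c x _ => ?_⟩
  obtain ⟨p, hp_len, hp, hp_time⟩ := exists_halttime_eq_ld (hU.exists_outputs x) c
  obtain ⟨q, hq_len, hq, hq_time⟩ := exists_length_eq_bbInv (haltsOn_of_outputs hp) hp_time.ge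
  obtain ⟨K, hK, hK_out⟩ := exists_mem_outrunSimulation hw₁ hq
  have h_out : maxOutput V K + 1 ∈ evalS V (wW ++ q) [] := hwW.mem (by rwa [evalS, hW])
  have h_len : (w₁ ++ p).length ≤ Cpx V x + (c + (w₁.length + w₂.length + wW.length)) := by
    have := Cpx_le_of_simulates hw₂ (hV.exists_outputs x)
    simp only [List.length_append]
    omega
  have h_time : ld V (c + (w₁.length + w₂.length + wW.length)) x < halttime V (wW ++ q) := calc
    _ ≤ halttime V (w₁ ++ p) := ld_le_halttime (hw₁.mem hp) h_len
    _ ≤ K := hK.halttime_le (haltsOn_of_outputs hp) (hp_time ▸ hq_time)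
    _ < halttime V (wW ++ q) := lt_halttime_of_maxOutput_lt h_out (Nat.lt_succ_self _)
  calc ldbb V _ x ≤ (wW ++ q).length := bbInv_le (Part.dom_iff_mem.2 ⟨_, h_out⟩) h_time.le
    _ ≤ ldbb U c x + _ := by
      simp only [ldbb, List.length_append, ← hq_len]
      omega
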